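/- Let Y := {y : ℤ → ℝ | y is bounded and lim_{i→+∞} y(i) exists} and X := {x ∈ Y | ∑_{k=1}^∞ x(−k)/2^k = lim_{i→+∞} x(i)}, both ordered pointwise. Let z : ℤ → ℝ be defined by z(−1) = 1 and z(k) = 0 for all k ≠ −1; then z ∈ Y. Then for every subset S ⊆ X one has Sᵈ ≠ {z}ᵈ, where for M ⊆ Y the disjoint complement is Mᵈ := {y ∈ Y | ∀ m ∈ M, min(|y(i)|, |m(i)|) = 0 for all i ∈ ℤ}. In particular, X is not fordable in Y. -/

import Mathlib

open Filter Topology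

/-- Membership in the vector lattice `Y` of Example 10: bounded functions `y : ℤ → ℝ` such
that `lim_{i→∞} y(i)` exists. -/
def MemY11 (y : ℤ → ℝ) : Prop :=
  (∃ M : ℝ, ∀ i : ℤ, |y i| ≤ M) ∧ ∃ L : ℝ, Tendsto y atTop (𝓝 L)

/-- Membership in the order dense subspace `X` of `Y`: those `x ∈ Y` with
`∑_{k=1}^∞ x(-k)/2^k = lim_{i→∞} x(i)`. -/
def MemX11 (x : ℤ → ℝ) : Prop :=
  MemY11 x ∧ Tendsto x atTop (𝓝 (∑' k : ℕ, x (-((k : ℤ) + 1)) / 2 ^ (k + 1)))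

/-- Disjoint complement within `Y` of a set `M` of functions: all `y ∈ Y` disjoint from
every element of `M`, where disjointness in `Y` is pointwise: `min(|y i|, |m i|) = 0`. -/
def DComp11 (M : Set (ℤ → ℝ)) : Set (ℤ → ℝ) :=
  {y : ℤ → ℝ | MemY11 y ∧ ∀ m ∈ M, ∀ i : ℤ, min |y i| |m i| = 0}

/-- The element `z ∈ Y` with `z(-1) = 1` and `z(k) = 0` for `k ≠ -1`. -/
def z11 : ℤ → ℝ := fun k => if k = -1 then 1 else 0

/-!
The disjoint complement `{z}ᵈ` consists of the elements of `Y` vanishing at `-1`. If `Sᵈ = {z}ᵈ`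
then `z ∉ Sᵈ`, so some `s ∈ S` has `s(-1) ≠ 0`. Such an `s ∈ X` cannot be supported at `-1` alone:
otherwise its limit would be `0` while its weighted sum is `s(-1)/2`. So `s(i) ≠ 0` for some
`i ≠ -1`, and the unit vector at `i` lies in `{z}ᵈ` but not in `Sᵈ`.
-/

lemma min_abs_eq_zero_iff {α : Type*} [AddCommGroup α] [LinearOrder α] [IsOrderedAddMonoid α]
    {a b : α} : min |a| |b| = 0 ↔ a = 0 ∨ b = 0 := by
  constructor
  · intro h
    rcases min_choice |a| |b| with hmin | hmin <;> rw [hmin, abs_eq_zero] at h <;> tauto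
  · rintro (rfl | rfl) <;> simp

lemma tendsto_pi_single_atTop {α M : Type*} [DecidableEq α] [Preorder α] [NoMaxOrder α]
    [TopologicalSpace M] [Zero M] (i : α) (c : M) :
    Tendsto (Pi.single i c : α → M) atTop (𝓝 0) := by
  refine tendsto_const_nhds.congr' ?_
  filter_upwards [eventually_gt_atTop i] with j hj
  simp [hj.ne']

lemma z11_eq_single : z11 = Pi.single (-1) 1 := by
  ext k
  simp [z11, Pi.single_apply]

lemma memY11_single (i : ℤ) (c : ℝ) : MemY11 (Pi.single i c) := by
  refine ⟨⟨|c|, fun j => ?_⟩, 0, tendsto_pi_single_atTop i c⟩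
  rcases eq_or_ne j i with rfl | hj
  · simp
  · simp [hj]

lemma single_mem_dComp11_iff (S : Set (ℤ → ℝ)) (i : ℤ) :
    Pi.single i 1 ∈ DComp11 S ↔ ∀ s ∈ S, s i = 0 := by
  refine ⟨fun h s hs => ?_, fun h => ⟨memY11_single i 1, fun s hs j => ?_⟩⟩
  · have hi := h.2 s hs i
    rw [Pi.single_eq_same, min_abs_eq_zero_iff] at hi
    simpa using hi
  · rcases eq_or_ne j i with rfl | hj
    · simp [h s hs]
    · simp [hj]

lemma MemX11.exists_ne_neg_one {x : ℤ → ℝ} (hx : MemX11 x) (hx₁ : x (-1) ≠ 0) :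
    ∃ i ≠ -1, x i ≠ 0 := by
  by_contra! hzero
  have hx_eq : x = Pi.single (-1) (x (-1)) := by
    ext k
    rcases eq_or_ne k (-1) with rfl | hk
    · simp
    · simp [hk, hzero k hk]
  have hsum : ∑' k : ℕ, x (-((k : ℤ) + 1)) / 2 ^ (k + 1) = x (-1) / 2 := by
    rw [tsum_eq_single 0 fun k hk => by rw [hzero _ (by omega), zero_div]]
    norm_num
  have hlim : x (-1) / 2 = 0 :=
    tendsto_nhds_unique (hsum ▸ hx.2) (hx_eq ▸ tendsto_pi_single_atTop (-1) (x (-1)))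
  exact hx₁ (by linarith)

/-- `z ∈ Y`, and for every subset `S ⊆ X` one has `Sᵈ ≠ {z}ᵈ`.
In particular `X` is not fordable in `Y`. -/
theorem statement11 :
    MemY11 z11 ∧
      ∀ S : Set (ℤ → ℝ), (∀ s ∈ S, MemX11 s) → DComp11 S ≠ DComp11 {z11} := by
  rw [z11_eq_single]
  refine ⟨memY11_single _ _, fun S hS heq => ?_⟩
  have hz : Pi.single (-1) 1 ∉ DComp11 S := by
    rw [heq, single_mem_dComp11_iff]
    simp
  obtain ⟨s, hsS, hs⟩ : ∃ s ∈ S, s (-1) ≠ 0 := by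
    simpa [single_mem_dComp11_iff] using hz
  obtain ⟨i, hi, hsi⟩ := (hS s hsS).exists_ne_neg_one hs
  have hi_mem : Pi.single i 1 ∈ DComp11 S := by
    rw [heq, single_mem_dComp11_iff]
    simp [hi]
  exact hsi ((single_mem_dComp11_iff S i).1 hi_mem s hsS)
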